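/- Let {x_i}_{i∈J} ⊆ ℝ^d be finitely many pairwise distinct points, let V, W ∈ C¹(ℝ^d; ℝ) with W(−ξ) = W(ξ) for all ξ, and define v(x) := ∇V(x) + Σ_{j ∈ J, x_j ≠ x} ∇W(x − x_j). For Δt ∈ ℝ define the updated positions x_i(Δt) := x_i + Δt·v(x_i) and the entropy S(Δt) := Σ_{i∈J} V(x_i(Δt)) + ½ Σ_{i∈J} Σ_{j∈J, j≠i} W(x_i(Δt) − x_j(Δt)). Then S is differentiable at Δt = 0 and S'(0) = Σ_{i∈J} |v(x_i)|² ≥ 0; hence S(Δt) = S(0) + Δt Σ_{i∈J} |v(x_i)|² + o(Δt), so up to higher-order terms the time-discrete entropy does not decrease. -/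

import Mathlib

/-!
Along the lines `t ↦ x i + t • u i` the potential term has derivative `∑ i, ⟪∇V (x i), u i⟫`
and the interaction term `½ ∑_{i ≠ j} ⟪∇W (x i - x j), u i - u j⟫`. Since `W` is even, `∇W` is
odd, so exchanging `i` and `j` turns the interaction derivative into
`∑_{i ≠ j} ⟪∇W (x i - x j), u i⟫`: the first variation of the energy is `∑ i, ⟪v (x i), u i⟫`.
Moving along the velocity itself, `u i = v (x i)`, gives `S'(0) = ∑ i, ‖v (x i)‖²`; injectivity
of `x` is what identifies `{j | x j ≠ x i}` with `univ.erase i`.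
-/

open Finset
open scoped Classical RealInnerProductSpace

section Gradient

variable {E : Type*} [NormedAddCommGroup E] [InnerProductSpace ℝ E] [CompleteSpace E]

theorem DifferentiableAt.hasDerivAt_comp_add_smul {f : E → ℝ} {p : E}
    (hf : DifferentiableAt ℝ f p) (c : E) :
    HasDerivAt (fun t : ℝ => f (p + t • c)) ⟪gradient f p, c⟫ 0 := by
  have hline : HasDerivAt (fun t : ℝ => p + t • c) c 0 := by
    simpa using ((hasDerivAt_id (0 : ℝ)).smul_const c).const_add p
  rw [inner_gradient_left]
  exact hf.hasFDerivAt.comp_hasDerivAt_of_eq 0 hline (by simp)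

theorem gradient_neg_of_even {f : E → ℝ} (heven : ∀ x, f (-x) = f x) {x : E}
    (hf : DifferentiableAt ℝ f (-x)) :
    gradient f (-x) = -gradient f x := by
  have hcomp : HasFDerivAt f (-(fderiv ℝ f (-x))) x := by
    have := hf.hasFDerivAt.comp x (hasFDerivAt_id x).neg
    simpa [Function.comp_def, heven] using this
  rw [gradient, gradient, hcomp.fderiv, map_neg, neg_neg]

end Gradient

section PairSums

variable {ι : Type*} [Fintype ι] [DecidableEq ι]

theorem sum_sum_erase_comm {M : Type*} [AddCommMonoid M] (f : ι → ι → M) :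
    ∑ i, ∑ j ∈ univ.erase i, f j i = ∑ i, ∑ j ∈ univ.erase i, f i j :=
  sum_comm' fun _ _ => by simp [ne_comm]

theorem sum_sum_erase_inner_sub_of_antisymm {E : Type*} [NormedAddCommGroup E]
    [InnerProductSpace ℝ E] {g : ι → ι → E} (hg : ∀ i j, g j i = -g i j) (u : ι → E) :
    ∑ i, ∑ j ∈ univ.erase i, ⟪g i j, u i - u j⟫ =
      2 * ∑ i, ∑ j ∈ univ.erase i, ⟪g i j, u i⟫ := by
  have hswap : ∑ i, ∑ j ∈ univ.erase i, ⟪g i j, u j⟫ =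
      -∑ i, ∑ j ∈ univ.erase i, ⟪g i j, u i⟫ := by
    rw [← sum_sum_erase_comm, ← sum_neg_distrib]
    refine sum_congr rfl fun i _ => ?_
    rw [← sum_neg_distrib]
    exact sum_congr rfl fun j _ => by rw [hg, inner_neg_left]
  simp only [inner_sub_right, sum_sub_distrib, hswap]
  ring

end PairSums

section InteractionEnergy

variable {E : Type*} [NormedAddCommGroup E] [InnerProductSpace ℝ E] [CompleteSpace E]
  {ι : Type*} [Fintype ι] [DecidableEq ι]

noncomputable def interactionEnergy (V W : E → ℝ) (y : ι → E) : ℝ :=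
  (∑ i, V (y i)) + (1 / 2) * ∑ i, ∑ j ∈ univ.erase i, W (y i - y j)

noncomputable def interactionVelocity (V W : E → ℝ) (y : ι → E) (i : ι) : E :=
  gradient V (y i) + ∑ j ∈ univ.erase i, gradient W (y i - y j)

theorem hasDerivAt_interactionEnergy_add_smul {V W : E → ℝ} (hV : Differentiable ℝ V)
    (hW : Differentiable ℝ W) (hWeven : ∀ ξ, W (-ξ) = W ξ) (y u : ι → E) :
    HasDerivAt (fun t : ℝ => interactionEnergy V W (y + t • u))
      (∑ i, ⟪interactionVelocity V W y i, u i⟫) 0 := by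
  have hVterm (i : ι) : HasDerivAt (fun t : ℝ => V (y i + t • u i)) ⟪gradient V (y i), u i⟫ 0 :=
    (hV _).hasDerivAt_comp_add_smul _
  have hWterm (i j : ι) : HasDerivAt (fun t : ℝ => W (y i + t • u i - (y j + t • u j)))
      ⟪gradient W (y i - y j), u i - u j⟫ 0 := by
    have hsplit (t : ℝ) : y i + t • u i - (y j + t • u j) = y i - y j + t • (u i - u j) := by
      rw [smul_sub]; abel
    simpa only [hsplit] using (hW _).hasDerivAt_comp_add_smul (u i - u j)
  have hodd (i j : ι) : gradient W (y j - y i) = -gradient W (y i - y j) := by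
    rw [← neg_sub, gradient_neg_of_even hWeven (hW _)]
  refine ((HasDerivAt.fun_sum fun i _ => hVterm i).add
    ((HasDerivAt.fun_sum fun i _ => HasDerivAt.fun_sum fun j _ => hWterm i j).const_mul
      (1 / 2))).congr_deriv ?_
  rw [sum_sum_erase_inner_sub_of_antisymm hodd]
  simp only [interactionVelocity, inner_add_left, sum_inner, sum_add_distrib]
  ring

end InteractionEnergy

/-- **Discrete-in-time entropy inequality for a discrete mass measure.**
Finitely many pairwise distinct points `x_i ∈ ℝ^d`, potentials `V, W ∈ C¹` with `W`
even, velocity `v(p) = ∇V(p) + Σ_{j : x_j ≠ p} ∇W(p − x_j)`, updated positions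
`x_i(Δt) = x_i + Δt·v(x_i)`, and entropy
`S(Δt) = Σ_i V(x_i(Δt)) + ½ Σ_i Σ_{j ≠ i} W(x_i(Δt) − x_j(Δt))`.  Then `S` is
differentiable at `Δt = 0` with `S'(0) = Σ_i |v(x_i)|² ≥ 0`. -/
theorem discrete_time_entropy_inequality_diracs {d : ℕ} {ι : Type*} [Fintype ι]
    (x : ι → EuclideanSpace ℝ (Fin d)) (hx : Function.Injective x)
    (V W : EuclideanSpace ℝ (Fin d) → ℝ)
    (hV : ContDiff ℝ 1 V) (hW : ContDiff ℝ 1 W)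
    (hWsymm : ∀ ξ, W (-ξ) = W ξ)
    (v : EuclideanSpace ℝ (Fin d) → EuclideanSpace ℝ (Fin d))
    (hv : ∀ p, v p = gradient V p +
      ∑ j ∈ Finset.univ.filter (fun j => x j ≠ p), gradient W (p - x j))
    (S : ℝ → ℝ)
    (hS : ∀ Δt, S Δt = (∑ i, V (x i + Δt • v (x i))) +
      (1/2) * ∑ i, ∑ j ∈ Finset.univ.erase i,
        W ((x i + Δt • v (x i)) - (x j + Δt • v (x j)))) :
    HasDerivAt S (∑ i, ‖v (x i)‖ ^ 2) 0 ∧ 0 ≤ ∑ i, ‖v (x i)‖ ^ 2 := by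
  have hvel (i : ι) : v (x i) = interactionVelocity V W x i := by
    have hothers : univ.filter (fun j => x j ≠ x i) = univ.erase i := by
      ext j; simp [hx.ne_iff]
    rw [hv, interactionVelocity, hothers]
  have hSeq : S = fun t => interactionEnergy V W (x + t • fun i => v (x i)) := funext hS
  refine ⟨?_, sum_nonneg fun i _ => sq_nonneg _⟩
  have hderiv := hasDerivAt_interactionEnergy_add_smul (hV.differentiable one_ne_zero)
    (hW.differentiable one_ne_zero) hWsymm x fun i => v (x i)
  simp only [← hvel, real_inner_self_eq_norm_sq] at hderiv
  rwa [hSeq]
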